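/- The soft second-price payment satisfies user individual rationality: for all bid vectors b ∈ [0,1]^n and all m > 0, 0 ≤ p_i(b_i, b_{-i}) ≤ b_i, where p_i(b_i,b_{-i}) = b_i - (Σ_j e^{m b_j})/(m e^{m b_i}) · ln( (Σ_j e^{m b_j}) / (1 + Σ_{j≠i} e^{m b_j}) ). -/

import Mathlib

open Finset

/-- Soft second-price payment rule with parameter `m`. -/
noncomputable def softPay (n : ℕ) (m : ℝ) (b : Fin n → ℝ) (i : Fin n) : ℝ :=
  b i - (∑ j, Real.exp (m * b j)) / (m * Real.exp (m * b i)) *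
    Real.log ((∑ j, Real.exp (m * b j)) /
      (1 + ∑ j ∈ Finset.univ.erase i, Real.exp (m * b j)))

/-! Writing `x = exp (m bᵢ)` and `T = ∑_{j ≠ i} exp (m bⱼ)`, the payment is
`bᵢ - (x + T) / (m x) * log ((x + T) / (1 + T))`. Since `x ≥ 1` the logarithm is nonnegative,
which gives `pᵢ ≤ bᵢ`. For `pᵢ ≥ 0` we need `(x + T) log ((x + T) / (1 + T)) ≤ x log x = m x bᵢ`,
an instance of the log-sum inequality for the pairs `(x, T)` and `(1, T)`, which in turn is
convexity of `t ↦ t log t`. -/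

open Real

theorem add_mul_log_div_add_le {a b c : ℝ} (ha : 0 ≤ a) (hb : 0 < b) (hc : 0 ≤ c) :
    (a + c) * log ((a + c) / (b + c)) ≤ a * log (a / b) := by
  have hbc : 0 < b + c := by positivity
  have hconv := convexOn_mul_log.2 (Set.mem_Ici.2 (div_nonneg ha hb.le)) (Set.mem_Ici.2 zero_le_one)
    (div_nonneg hb.le hbc.le) (div_nonneg hc hbc.le) (by field_simp)
  have hpoint : b / (b + c) * (a / b) + c / (b + c) * 1 = (a + c) / (b + c) := by field_simp
  simp only [smul_eq_mul, log_one, mul_zero, add_zero] at hconv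
  rw [hpoint] at hconv
  calc (a + c) * log ((a + c) / (b + c))
      = (b + c) * ((a + c) / (b + c) * log ((a + c) / (b + c))) := by field_simp
    _ ≤ (b + c) * (b / (b + c) * (a / b * log (a / b))) := mul_le_mul_of_nonneg_left hconv hbc.le
    _ = a * log (a / b) := by field_simp

theorem softPay_eq (n : ℕ) (m : ℝ) (b : Fin n → ℝ) (i : Fin n) :
    softPay n m b i = b i - (exp (m * b i) + ∑ j ∈ univ.erase i, exp (m * b j)) /
      (m * exp (m * b i)) * log ((exp (m * b i) + ∑ j ∈ univ.erase i, exp (m * b j)) /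
        (1 + ∑ j ∈ univ.erase i, exp (m * b j))) := by
  rw [softPay, ← add_sum_erase _ _ (mem_univ i)]

theorem softPay_nonneg {n : ℕ} {m : ℝ} (hm : 0 < m) (b : Fin n → ℝ) (i : Fin n) :
    0 ≤ softPay n m b i := by
  have hT : 0 ≤ ∑ j ∈ univ.erase i, exp (m * b j) := sum_nonneg fun j _ => (exp_pos _).le
  rw [softPay_eq, sub_nonneg, div_mul_eq_mul_div, div_le_iff₀ (by positivity)]
  generalize ∑ j ∈ univ.erase i, exp (m * b j) = T at hT ⊢
  calc (exp (m * b i) + T) * log ((exp (m * b i) + T) / (1 + T))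
      ≤ exp (m * b i) * log (exp (m * b i) / 1) := add_mul_log_div_add_le (exp_pos _).le one_pos hT
    _ = b i * (m * exp (m * b i)) := by rw [div_one, log_exp]; ring

theorem softPay_le {n : ℕ} {m : ℝ} (hm : 0 ≤ m) {b : Fin n → ℝ} {i : Fin n} (hbi : 0 ≤ b i) :
    softPay n m b i ≤ b i := by
  have hT : 0 ≤ ∑ j ∈ univ.erase i, exp (m * b j) := sum_nonneg fun j _ => (exp_pos _).le
  have hx : 1 ≤ exp (m * b i) := one_le_exp (mul_nonneg hm hbi)
  rw [softPay_eq, sub_le_self_iff]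
  generalize ∑ j ∈ univ.erase i, exp (m * b j) = T at hT ⊢
  have hlog : 0 ≤ log ((exp (m * b i) + T) / (1 + T)) :=
    log_nonneg ((one_le_div (by positivity)).2 (by linarith))
  positivity

theorem stmt6_general (n : ℕ) (m : ℝ) (hm : 0 < m)
    (b : Fin n → ℝ) (hb : ∀ j, b j ∈ Set.Icc (0:ℝ) 1) (i : Fin n) :
    0 ≤ softPay n m b i ∧ softPay n m b i ≤ b i :=
  ⟨softPay_nonneg hm b i, softPay_le hm.le (hb i).1⟩

theorem stmt6 (n : ℕ) (hn : 2 ≤ n) (m : ℝ) (hm : 0 < m)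
    (b : Fin n → ℝ) (hb : ∀ j, b j ∈ Set.Icc (0:ℝ) 1) (i : Fin n) :
    0 ≤ softPay n m b i ∧ softPay n m b i ≤ b i :=
  stmt6_general n m hm b hb i
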